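/- arXiv:1204.4251 — 2 statements merged into one kernel-verified Lean document; each statement's English description precedes it below -/
import Mathlib

section
/- Let n ≥ 5, let X and Y be adjacent vertices of the augmented cube AQ_n, and let Z = X̄_n, so that P = (Y, X, Z) is a path of length two in AQ_n (with Y ≠ Z). Then |N_{AQ_n}(P)| ≥ 6n − 15, where N_{AQ_n}(P) is the set of vertices outside {X, Y, Z} that are adjacent to at least one of X, Y, Z. -/
/-- Flip the single bit at index `i` (paper bit `i+1`), i.e. the map `X ↦ X_{i+1}`. -/
def flipBit {n : ℕ} (i : Fin n) (X : Fin n → Bool) : Fin n → Bool :=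
  fun j => if j = i then !(X j) else X j

/-- Flip all bits at indices `≤ i` (paper bits `i+1, i, …, 1`), i.e. the map `X ↦ X̄_{i+1}`. -/
def flipDown {n : ℕ} (i : Fin n) (X : Fin n → Bool) : Fin n → Bool :=
  fun j => if j ≤ i then !(X j) else X j

lemma flipBit_flipBit {n : ℕ} (i : Fin n) (X : Fin n → Bool) :
    flipBit i (flipBit i X) = X := by
  funext j; by_cases h : j = i <;> simp [flipBit, h]

lemma flipDown_flipDown {n : ℕ} (i : Fin n) (X : Fin n → Bool) :
    flipDown i (flipDown i X) = X := by
  funext j; by_cases h : j ≤ i <;> simp [flipDown, h]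

/-- The augmented cube `AQ_n`: vertices are `n`-bit strings; two distinct vertices `X, Y`
are adjacent iff `Y = X_i` for some `1 ≤ i ≤ n` (a hypercube edge) or `Y = X̄_i` for some
`2 ≤ i ≤ n` (a complement edge).  Paper bit `i` corresponds to index `i - 1 : Fin n`. -/
def augCube (n : ℕ) : SimpleGraph (Fin n → Bool) where
  Adj X Y := X ≠ Y ∧
    ((∃ i : Fin n, Y = flipBit i X) ∨ (∃ i : Fin n, 1 ≤ i.val ∧ Y = flipDown i X))
  symm := by
    constructor
    rintro X Y ⟨hne, h⟩
    refine ⟨hne.symm, ?_⟩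
    rcases h with ⟨i, rfl⟩ | ⟨i, hi, rfl⟩
    · exact Or.inl ⟨i, (flipBit_flipBit i X).symm⟩
    · exact Or.inr ⟨i, hi, (flipDown_flipDown i X).symm⟩
  loopless := ⟨fun X h => h.1 rfl⟩

/-!
Encode a vertex `W` by the set of positions in which it differs from `X`. `AQ_n` is a Cayley
graph of `(ℤ/2)ⁿ`, so `W ∈ N(X)` iff this mask is a single position or an initial segment
`{0, …, a}` with `a ≥ 1`, and since `X̄_n` is the bitwise complement of `X`, `W ∈ N(X̄_n)` iff the
complement of the mask is of that shape. Every claim about adjacency thus becomes a claim about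
masks, decided by comparing them at a few positions.

`AQ_n` is `(2n - 1)`-regular, `N(X) ∩ N(Z) = {X_n, X̄_{n-1}}`, and at most `7` of the `2n - 1`
neighbours of `Y` lie in `N(X) ∪ N(Z)`. Hence `|N(X) ∪ N(Y) ∪ N(Z)| ≥ 2(2n - 1) - 2 + (2n - 1) - 7`,
and removing `X, Y, Z` leaves at least `6n - 15` vertices.
-/

open Finset

lemma Finset.card_image_inter_le {α β γ : Type*} [DecidableEq β] {f : α → β} {g : α → γ}
    (hg : Function.Injective g) {s : Finset α} {U : Finset β} {S : Finset γ}
    (h : ∀ c ∈ s, f c ∈ U → g c ∈ S) : #(s.image f ∩ U) ≤ #S :=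
  calc #(s.image f ∩ U) ≤ #((s.filter (f · ∈ U)).image f) := by
        refine card_le_card fun W hW => ?_
        obtain ⟨hW, hWU⟩ := mem_inter.1 hW
        obtain ⟨c, hc, rfl⟩ := mem_image.1 hW
        exact mem_image_of_mem f (mem_filter.2 ⟨hc, hWU⟩)
    _ ≤ #(s.filter (f · ∈ U)) := card_image_le
    _ ≤ #S := card_le_card_of_injOn g (fun c hc => h c (mem_filter.1 hc).1 (mem_filter.1 hc).2)
        hg.injOn

lemma Finset.card_add_card_add_card_le {α : Type*} [DecidableEq α] (A B C D : Finset α) :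
    #A + #B + #C ≤ #((A ∪ B ∪ C) \ D) + #D + #(A ∩ C) + #(B ∩ (A ∪ C)) := by
  have hAC := card_union_add_card_inter A C
  have hB := card_union_add_card_inter B (A ∪ C)
  have hD := card_le_card_sdiff_add_card (s := B ∪ (A ∪ C)) (t := D)
  rw [union_right_comm, union_comm (A ∪ C)]
  omega

lemma Fin.card_filter_one_le_val {n : ℕ} : #{i : Fin n | 1 ≤ i.val} = n - 1 := by
  cases n with
  | zero => rfl
  | succ n =>
    have : ({i : Fin (n + 1) | 1 ≤ i.val} : Finset _) = Ioi 0 := by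
      ext i
      simp [Nat.one_le_iff_ne_zero]
    simp [this]

namespace AugCube

variable {n : ℕ}

/-- Masks are predicates on `ℕ` rather than on `Fin n`, so that comparing two of them is
arithmetic for `omega`; only the positions `t < n` matter. -/
def flipMask (P : ℕ → Prop) [DecidablePred P] (V : Fin n → Bool) : Fin n → Bool :=
  fun t => xor (V t) (decide (P t))

lemma flipBit_eq_flipMask (i : Fin n) (V : Fin n → Bool) :
    flipBit i V = flipMask (· = i.val) V := by
  funext t
  simp only [flipBit, flipMask, Fin.val_inj]
  split_ifs with h <;> simp [h]

lemma flipDown_eq_flipMask (i : Fin n) (V : Fin n → Bool) :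
    flipDown i V = flipMask (· ≤ i.val) V := by
  funext t
  simp only [flipDown, flipMask, ← Fin.le_def]
  split_ifs with h <;> simp [h]

lemma flipMask_flipMask (P Q : ℕ → Prop) [DecidablePred P] [DecidablePred Q]
    (V : Fin n → Bool) : flipMask P (flipMask Q V) = flipMask (fun t => ¬(P t ↔ Q t)) V := by
  funext t
  by_cases hP : P t <;> by_cases hQ : Q t <;> simp [flipMask, hP, hQ]

lemma flipMask_eq_flipMask_iff {P Q : ℕ → Prop} [DecidablePred P] [DecidablePred Q]
    (V : Fin n → Bool) : flipMask P V = flipMask Q V ↔ ∀ t < n, (P t ↔ Q t) := by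
  simp [flipMask, funext_iff, Fin.forall_iff]

lemma flipMask_ne_self {P : ℕ → Prop} [DecidablePred P] {t : ℕ} (ht : t < n) (hP : P t)
    (V : Fin n → Bool) : flipMask P V ≠ V := fun h => by
  simpa [flipMask, hP] using congrFun h ⟨t, ht⟩

lemma adj_iff {V W : Fin n → Bool} : (augCube n).Adj V W ↔
    (∃ i, W = flipBit i V) ∨ ∃ i : Fin n, 1 ≤ i.val ∧ W = flipDown i V := by
  refine ⟨And.right, fun h => ⟨?_, h⟩⟩
  rcases h with ⟨i, rfl⟩ | ⟨i, hi, rfl⟩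
  · rw [flipBit_eq_flipMask]
    exact (flipMask_ne_self (P := (· = i.val)) i.isLt rfl V).symm
  · rw [flipDown_eq_flipMask]
    exact (flipMask_ne_self (P := (· ≤ i.val)) (t := 0) (by omega) (Nat.zero_le _) V).symm

instance (n : ℕ) : DecidableRel (augCube n).Adj :=
  fun _ _ => decidable_of_iff' _ adj_iff

lemma neighborFinset_eq (V : Fin n → Bool) : (augCube n).neighborFinset V =
    univ.image (flipBit · V) ∪ (univ.filter fun i : Fin n => 1 ≤ i.val).image (flipDown · V) := by
  ext W
  simp [adj_iff, eq_comm]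

lemma flipBit_left_injective (V : Fin n → Bool) : Function.Injective (flipBit · V) := by
  intro i k h
  simp only [flipBit_eq_flipMask, flipMask_eq_flipMask_iff] at h
  exact Fin.ext ((h i i.isLt).1 rfl)

lemma flipDown_left_injective (V : Fin n → Bool) : Function.Injective (flipDown · V) := by
  intro i k h
  simp only [flipDown_eq_flipMask, flipMask_eq_flipMask_iff] at h
  have := h i i.isLt
  have := h k k.isLt
  exact Fin.ext (by omega)

lemma flipBit_ne_flipDown {i k : Fin n} (hk : 1 ≤ k.val) (V : Fin n → Bool) :
    flipBit i V ≠ flipDown k V := by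
  intro h
  simp only [flipBit_eq_flipMask, flipDown_eq_flipMask, flipMask_eq_flipMask_iff] at h
  have := h 0
  have := h 1
  omega

theorem isRegularOfDegree : (augCube n).IsRegularOfDegree (2 * n - 1) := by
  intro V
  rw [← SimpleGraph.card_neighborFinset_eq_degree, neighborFinset_eq, card_union_of_disjoint,
    card_image_of_injective _ (flipBit_left_injective V),
    card_image_of_injective _ (flipDown_left_injective V), card_univ, Fintype.card_fin,
    Fin.card_filter_one_le_val]
  · omega
  · simp only [disjoint_left, mem_image, mem_filter, mem_univ, true_and]
    rintro _ ⟨i, rfl⟩ ⟨k, hk, h⟩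
    exact flipBit_ne_flipDown hk V h.symm

def IsNbhdMask (n : ℕ) (P : ℕ → Prop) : Prop :=
  ∃ a < n, (∀ t < n, P t ↔ t = a) ∨ (1 ≤ a ∧ ∀ t < n, P t ↔ t ≤ a)

lemma isNbhdMask_of_adj {P : ℕ → Prop} [DecidablePred P] {V : Fin n → Bool}
    (h : (augCube n).Adj V (flipMask P V)) : IsNbhdMask n P := by
  rcases adj_iff.1 h with ⟨a, ha⟩ | ⟨a, ha1, ha⟩
  · rw [flipBit_eq_flipMask, flipMask_eq_flipMask_iff] at ha
    exact ⟨a, a.isLt, Or.inl ha⟩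
  · rw [flipDown_eq_flipMask, flipMask_eq_flipMask_iff] at ha
    exact ⟨a, a.isLt, Or.inr ⟨ha1, ha⟩⟩

lemma isNbhdMask_not_of_adj_flipDown {P : ℕ → Prop} [DecidablePred P] {V : Fin n → Bool}
    {i : Fin n} (hi : i.val = n - 1) (h : (augCube n).Adj (flipDown i V) (flipMask P V)) :
    IsNbhdMask n (fun t => ¬P t) := by
  have hcompl : flipMask P V = flipMask (fun t => ¬P t) (flipDown i V) := by
    rw [flipDown_eq_flipMask, flipMask_flipMask, flipMask_eq_flipMask_iff]
    intro t ht
    have : t ≤ i.val := by omega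
    tauto
  rw [hcompl] at h
  exact isNbhdMask_of_adj h

lemma isNbhdMask_or_of_mem_union {P : ℕ → Prop} [DecidablePred P] {X : Fin n → Bool}
    {i : Fin n} (hi : i.val = n - 1)
    (h : flipMask P X ∈ (augCube n).neighborFinset X ∪ (augCube n).neighborFinset (flipDown i X)) :
    IsNbhdMask n P ∨ IsNbhdMask n (fun t => ¬P t) := by
  simp only [mem_union, SimpleGraph.mem_neighborFinset] at h
  exact h.imp isNbhdMask_of_adj (isNbhdMask_not_of_adj_flipDown hi)

lemma eq_of_isNbhdMask_not_eq {a : ℕ} (hn : 3 ≤ n) (ha : a < n)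
    (h : IsNbhdMask n (fun t => ¬t = a)) : a = n - 1 := by
  obtain ⟨b, hb, E | ⟨hb1, E⟩⟩ := h
  · have := E 0; have := E 1; have := E 2; omega
  · have := E (n - 1); have := E a; omega

lemma eq_of_isNbhdMask_not_le {a : ℕ} (h : IsNbhdMask n (fun t => ¬t ≤ a)) : a = n - 2 := by
  obtain ⟨b, hb, E | ⟨hb1, E⟩⟩ := h
  · have := E (a + 1); have := E (a + 2); have := E b; omega
  · have := E 0; omega

section MaskCases

variable {c j : ℕ}

lemma cases_of_isNbhdMask_bit_bit (hn : 4 ≤ n) (hc : c < n) (hj : j < n)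
    (h : IsNbhdMask n (fun t => ¬(t = c ↔ t = j)) ∨ IsNbhdMask n (fun t => ¬¬(t = c ↔ t = j))) :
    c = j ∨ (c ≤ 1 ∧ j ≤ 1) ∨ (n - 2 ≤ c ∧ n - 2 ≤ j) := by
  obtain ⟨a, ha, E | ⟨ha1, E⟩⟩ | ⟨a, ha, E | ⟨ha1, E⟩⟩ := h
  · have := E c; have := E j; omega
  · have := E 0; have := E 1; omega
  · have := E 0; have := E 1; have := E 2; have := E 3; omega
  · have := E (n - 1); have := E (n - 2); have := E c; have := E j; omega

lemma cases_of_isNbhdMask_down_bit (hc1 : 1 ≤ c) (hc : c < n) (hj : j < n)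
    (h : IsNbhdMask n (fun t => ¬(t ≤ c ↔ t = j)) ∨ IsNbhdMask n (fun t => ¬¬(t ≤ c ↔ t = j))) :
    c + 1 = j ∨ c = j ∨ c = n - 1 ∨ (c = 1 ∧ j = 0) ∨ (c = n - 3 ∧ j = n - 1) := by
  obtain ⟨a, ha, E | ⟨ha1, E⟩⟩ | ⟨a, ha, E | ⟨ha1, E⟩⟩ := h
  · have := E 0; have := E 1; have := E 2; omega
  · have := E c; have := E (c + 1); have := E j; omega
  · have := E (n - 1); have := E (n - 2); have := E (n - 3); have := E j; omega
  · have := E 0; have := E 1; omega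

lemma cases_of_isNbhdMask_bit_down (hj1 : 1 ≤ j) (hc : c < n) (hj : j < n - 1)
    (h : IsNbhdMask n (fun t => ¬(t = c ↔ t ≤ j)) ∨ IsNbhdMask n (fun t => ¬¬(t = c ↔ t ≤ j))) :
    c = j ∨ c = j + 1 ∨ (c = 0 ∧ j = 1) ∨ (c = n - 1 ∧ j = n - 3) := by
  obtain ⟨a, ha, E | ⟨ha1, E⟩⟩ | ⟨a, ha, E | ⟨ha1, E⟩⟩ := h
  · have := E 0; have := E 1; have := E 2; omega
  · have := E c; have := E j; have := E (j + 1); omega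
  · have := E (n - 1); have := E (n - 2); have := E (n - 3); have := E c; omega
  · have := E 0; have := E 1; omega

lemma cases_of_isNbhdMask_down_down (hc : c < n) (hj : j < n - 1)
    (h : IsNbhdMask n (fun t => ¬(t ≤ c ↔ t ≤ j)) ∨ IsNbhdMask n (fun t => ¬¬(t ≤ c ↔ t ≤ j))) :
    c + 1 = j ∨ c = j ∨ c = j + 1 ∨ c = n - 1 := by
  obtain ⟨a, ha, E | ⟨ha1, E⟩⟩ | ⟨a, ha, E | ⟨ha1, E⟩⟩ := h
  · have := E c; have := E (c + 1); have := E j; have := E (j + 1); omega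
  · have := E 0; omega
  · have := E (n - 1); have := E c; have := E j; omega
  · have := E (n - 1); have := E c; have := E j; omega

end MaskCases

lemma card_neighborFinset_inter_neighborFinset_flipDown_le (hn : 3 ≤ n) (X : Fin n → Bool)
    {i : Fin n} (hi : i.val = n - 1) :
    #((augCube n).neighborFinset X ∩ (augCube n).neighborFinset (flipDown i X)) ≤ 2 := by
  refine (card_le_card (t := {flipBit i X, flipDown ⟨n - 2, by omega⟩ X}) ?_).trans card_le_two
  intro W hW
  obtain ⟨hXW, hZW⟩ := mem_inter.1 hW
  rw [SimpleGraph.mem_neighborFinset] at hXW hZW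
  rcases adj_iff.1 hXW with ⟨a, rfl⟩ | ⟨a, -, rfl⟩
  · rw [flipBit_eq_flipMask] at hZW
    have := eq_of_isNbhdMask_not_eq hn a.isLt (isNbhdMask_not_of_adj_flipDown hi hZW)
    simp [show a = i from Fin.ext (by omega)]
  · rw [flipDown_eq_flipMask a] at hZW
    have := eq_of_isNbhdMask_not_le (isNbhdMask_not_of_adj_flipDown hi hZW)
    simp [show a = ⟨n - 2, by omega⟩ from Fin.ext this]

lemma card_neighborFinset_inter_le {Y : Fin n → Bool} {U : Finset (Fin n → Bool)}
    (S₁ S₂ : Finset ℕ) (h₁ : ∀ c : Fin n, flipBit c Y ∈ U → c.val ∈ S₁)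
    (h₂ : ∀ c : Fin n, 1 ≤ c.val → flipDown c Y ∈ U → c.val ∈ S₂) :
    #((augCube n).neighborFinset Y ∩ U) ≤ #S₁ + #S₂ := by
  rw [neighborFinset_eq, union_inter_distrib_right]
  refine (card_union_le _ _).trans (add_le_add ?_ ?_)
  · exact card_image_inter_le Fin.val_injective fun c _ => h₁ c
  · exact card_image_inter_le Fin.val_injective fun c hc => h₂ c (mem_filter.1 hc).2

lemma card_neighborFinset_flipBit_inter_le (hn : 4 ≤ n) (X : Fin n → Bool) (j : Fin n)
    {i : Fin n} (hi : i.val = n - 1) :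
    #((augCube n).neighborFinset (flipBit j X) ∩
      ((augCube n).neighborFinset X ∪ (augCube n).neighborFinset (flipDown i X))) ≤ 7 := by
  refine (card_neighborFinset_inter_le {j.val, 1 - j.val, 2 * n - 3 - j.val}
    {j.val - 1, j.val, n - 1, if j.val = 0 then 1 else n - 3} ?_ ?_).trans
    (add_le_add card_le_three card_le_four)
  · intro c hc
    rw [flipBit_eq_flipMask c, flipBit_eq_flipMask j, flipMask_flipMask] at hc
    have := cases_of_isNbhdMask_bit_bit hn c.isLt j.isLt
      (isNbhdMask_or_of_mem_union hi hc)
    simp only [mem_insert, mem_singleton]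
    omega
  · intro c hc1 hc
    rw [flipDown_eq_flipMask c, flipBit_eq_flipMask j, flipMask_flipMask] at hc
    have := cases_of_isNbhdMask_down_bit hc1 c.isLt j.isLt (isNbhdMask_or_of_mem_union hi hc)
    split_ifs <;> simp only [mem_insert, mem_singleton] <;> omega

lemma card_neighborFinset_flipDown_inter_le (hn : 5 ≤ n) (X : Fin n → Bool) {j : Fin n}
    (hj1 : 1 ≤ j.val) (hj : j.val < n - 1) {i : Fin n} (hi : i.val = n - 1) :
    #((augCube n).neighborFinset (flipDown j X) ∩
      ((augCube n).neighborFinset X ∪ (augCube n).neighborFinset (flipDown i X))) ≤ 7 := by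
  refine (card_neighborFinset_inter_le {j.val, j.val + 1, if j.val = 1 then 0 else n - 1}
    {j.val - 1, j.val, j.val + 1, n - 1} ?_ ?_).trans (add_le_add card_le_three card_le_four)
  · intro c hc
    rw [flipBit_eq_flipMask c, flipDown_eq_flipMask j, flipMask_flipMask] at hc
    have := cases_of_isNbhdMask_bit_down hj1 c.isLt hj (isNbhdMask_or_of_mem_union hi hc)
    split_ifs <;> simp only [mem_insert, mem_singleton] <;> omega
  · intro c hc1 hc
    rw [flipDown_eq_flipMask c, flipDown_eq_flipMask j, flipMask_flipMask] at hc
    have := cases_of_isNbhdMask_down_down c.isLt hj (isNbhdMask_or_of_mem_union hi hc)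
    simp only [mem_insert, mem_singleton]
    omega

lemma card_neighborFinset_inter_le_seven (hn : 5 ≤ n) {X Y : Fin n → Bool}
    (hYX : (augCube n).Adj Y X) {i : Fin n} (hi : i.val = n - 1) (hYZ : Y ≠ flipDown i X) :
    #((augCube n).neighborFinset Y ∩
      ((augCube n).neighborFinset X ∪ (augCube n).neighborFinset (flipDown i X))) ≤ 7 := by
  rcases adj_iff.1 hYX.symm with ⟨j, rfl⟩ | ⟨j, hj1, rfl⟩
  · exact card_neighborFinset_flipBit_inter_le (by omega) X j hi
  · have hj : j ≠ i := fun h => hYZ (h ▸ rfl)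
    exact card_neighborFinset_flipDown_inter_le hn X hj1 (by omega) hi

end AugCube

open AugCube

/-- Let `n ≥ 5`, let `X` and `Y` be adjacent vertices of `AQ_n`, and let `Z = X̄_n`
(with `Y ≠ Z`), so that `P = (Y, X, Z)` is a path of length two.  Then
`|N(P)| ≥ 6n - 15`. -/
theorem augCube_path_neighborhood_lower_top (n : ℕ) (hn : 5 ≤ n) (X Y Z : Fin n → Bool)
    (hYX : (augCube n).Adj Y X) (hZ : Z = flipDown ⟨n - 1, by omega⟩ X) (hYZ : Y ≠ Z) :
    6 * n - 15 ≤ {W | W ∉ ({X, Y, Z} : Set (Fin n → Bool)) ∧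
      ((augCube n).Adj X W ∨ (augCube n).Adj Y W ∨ (augCube n).Adj Z W)}.ncard := by
  have hXZ := card_neighborFinset_inter_neighborFinset_flipDown_le (by omega) X
    (i := ⟨n - 1, by omega⟩) rfl
  have hY := card_neighborFinset_inter_le_seven hn hYX (i := ⟨n - 1, by omega⟩) rfl (hZ ▸ hYZ)
  rw [← hZ] at hXZ hY
  set N := (augCube n).neighborFinset
  have hdeg (V : Fin n → Bool) : #(N V) = 2 * n - 1 := isRegularOfDegree.degree_eq V
  have hcount := card_add_card_add_card_le (N X) (N Y) (N Z) {X, Y, Z}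
  rw [hdeg, hdeg, hdeg] at hcount
  have hXYZ : #({X, Y, Z} : Finset _) ≤ 3 := card_le_three
  have hcard : 6 * n - 15 ≤ #((N X ∪ N Y ∪ N Z) \ {X, Y, Z}) := by omega
  convert hcard using 1
  rw [← Set.ncard_coe_finset]
  congr 1
  ext W
  simp [N, and_comm]
end

section
/- Let n ≥ 4 and let C_3 be a cycle of length three in the augmented cube AQ_n. Then the edge boundary E_{AQ_n}(C_3) — the set of edges with exactly one endpoint in V(C_3) — has cardinality 6n − 9, and removing E_{AQ_n}(C_3) from AQ_n yields a disconnected graph in which no connected component is an isolated vertex or an isolated edge. Consequently λ_2(AQ_n) ≤ 6n − 9 for n ≥ 4. -/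
/-!
Deleting the edge boundary of a vertex set `T` keeps exactly the edges with both ends on the
same side of `T`, so no component of what remains meets both `T` and its complement. In a
`d`-regular graph each vertex of a clique `T` has `d + 1 - |T|` neighbours outside `T`; for a
triangle in the `(2n - 1)`-regular graph `AQ_n` this gives `3 (2n - 3) = 6n - 9` boundary edges.
The triangle itself is one component, and every vertex outside it keeps at least `2n - 4` of its
neighbours, so no component has fewer than three vertices.
-/

namespace SimpleGraph

variable {V : Type*} (G : SimpleGraph V) (T : Set V)

def edgeBoundary : Set (Sym2 V) :=
  {e | ∃ u v, e = s(u, v) ∧ G.Adj u v ∧ u ∈ T ∧ v ∉ T}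

variable {G T}

lemma edgeBoundary_subset_edgeSet : G.edgeBoundary T ⊆ G.edgeSet := by
  rintro _ ⟨u, v, rfl, huv, -, -⟩
  exact huv

lemma deleteEdges_edgeBoundary_adj {x y : V} :
    (G.deleteEdges (G.edgeBoundary T)).Adj x y ↔ G.Adj x y ∧ (x ∈ T ↔ y ∈ T) := by
  simp only [deleteEdges_adj, edgeBoundary, Set.mem_ofPred_eq, Sym2.eq_iff]
  constructor
  · rintro ⟨hxy, hF⟩
    refine ⟨hxy, fun hx => ?_, fun hy => ?_⟩ <;> by_contra h
    · exact hF ⟨x, y, Or.inl ⟨rfl, rfl⟩, hxy, hx, h⟩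
    · exact hF ⟨y, x, Or.inr ⟨rfl, rfl⟩, hxy.symm, hy, h⟩
  · rintro ⟨hxy, hT⟩
    refine ⟨hxy, ?_⟩
    rintro ⟨u, v, (⟨rfl, rfl⟩ | ⟨rfl, rfl⟩), -, hu, hv⟩
    exacts [hv (hT.1 hu), hv (hT.2 hu)]

lemma Reachable.mem_iff_of_deleteEdges_edgeBoundary {x y : V}
    (h : (G.deleteEdges (G.edgeBoundary T)).Reachable x y) : x ∈ T ↔ y ∈ T := by
  obtain ⟨p⟩ := h
  induction p with
  | nil => rfl
  | cons hadj _ ih => exact (deleteEdges_edgeBoundary_adj.1 hadj).2.trans ih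

lemma not_connected_deleteEdges_edgeBoundary {x y : V} (hx : x ∈ T) (hy : y ∉ T) :
    ¬ (G.deleteEdges (G.edgeBoundary T)).Connected :=
  fun h => hy ((h.preconnected x y).mem_iff_of_deleteEdges_edgeBoundary.1 hx)

lemma edgeBoundary_eq_biUnion :
    G.edgeBoundary T = ⋃ u ∈ T, (s(u, ·)) '' (G.neighborSet u \ T) := by
  ext e
  simp only [edgeBoundary, Set.mem_ofPred_eq, Set.mem_iUnion, Set.mem_image, Set.mem_sdiff,
    mem_neighborSet, exists_prop]
  constructor
  · rintro ⟨u, v, rfl, huv, hu, hv⟩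
    exact ⟨u, hu, v, ⟨huv, hv⟩, rfl⟩
  · rintro ⟨u, hu, v, ⟨huv, hv⟩, rfl⟩
    exact ⟨u, v, rfl, huv, hu, hv⟩

lemma ncard_edgeBoundary [Finite V] :
    (G.edgeBoundary T).ncard = ∑ᶠ u ∈ T, (G.neighborSet u \ T).ncard := by
  have hinj : ∀ u ∈ T, Set.InjOn (s(u, ·)) (G.neighborSet u \ T) :=
    fun _ _ _ _ _ _ h => Sym2.congr_right.1 h
  rw [edgeBoundary_eq_biUnion, (Set.toFinite T).ncard_biUnion (fun _ _ => Set.toFinite _)]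
  · exact finsum_mem_congr rfl fun u hu => (hinj u hu).ncard_image
  · rintro u hu u' hu' hne
    refine Set.disjoint_left.2 ?_
    rintro _ ⟨v, hv, rfl⟩ ⟨v', hv', he⟩
    rcases Sym2.eq_iff.1 he with ⟨h, -⟩ | ⟨-, h⟩
    · exact hne h.symm
    · exact hv'.2 (h ▸ hu)

lemma ncard_neighborSet_sdiff_of_isClique [Finite V] (hT : G.IsClique T) {u : V} (hu : u ∈ T) :
    (G.neighborSet u \ T).ncard = (G.neighborSet u).ncard + 1 - T.ncard := by
  have hsub : T \ {u} ⊆ G.neighborSet u := fun v hv => hT hu hv.1 (Ne.symm hv.2)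
  have hdiff : G.neighborSet u \ T = G.neighborSet u \ (T \ {u}) := by
    ext v
    simp only [Set.mem_sdiff, Set.mem_singleton_iff, mem_neighborSet]
    exact ⟨fun h => ⟨h.1, fun h' => h.2 h'.1⟩,
      fun h => ⟨h.1, fun hv => h.2 ⟨hv, (G.ne_of_adj h.1).symm⟩⟩⟩
  have hle := Set.ncard_le_ncard hsub
  have hpos : 0 < T.ncard := (Set.ncard_pos (Set.toFinite T)).2 ⟨u, hu⟩
  rw [Set.ncard_sdiff_singleton_of_mem hu] at hle
  rw [hdiff, Set.ncard_sdiff hsub, Set.ncard_sdiff_singleton_of_mem hu]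
  omega

lemma ncard_edgeBoundary_of_isClique [Finite V] {d : ℕ}
    (hreg : ∀ v, (G.neighborSet v).ncard = d) (hT : G.IsClique T) :
    (G.edgeBoundary T).ncard = T.ncard * (d + 1 - T.ncard) := by
  rw [ncard_edgeBoundary, finsum_mem_congr rfl fun u hu => by
      rw [ncard_neighborSet_sdiff_of_isClique hT hu, hreg],
    finsum_mem_eq_finite_toFinset_sum _ (Set.toFinite T), Finset.sum_const, smul_eq_mul,
    Set.ncard_eq_toFinset_card T]

lemma subset_supp_connectedComponentMk_of_isClique (hT : G.IsClique T) {v : V} (hv : v ∈ T) :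
    T ⊆ ((G.deleteEdges (G.edgeBoundary T)).connectedComponentMk v).supp := by
  intro x hx
  rw [ConnectedComponent.mem_supp_iff, ConnectedComponent.eq]
  rcases eq_or_ne x v with rfl | hxv
  · rfl
  · exact (deleteEdges_edgeBoundary_adj.2 ⟨hT hx hv hxv, iff_of_true hx hv⟩).reachable

lemma insert_neighborSet_sdiff_subset_supp_connectedComponentMk {v : V} (hv : v ∉ T) :
    insert v (G.neighborSet v \ T) ⊆
      ((G.deleteEdges (G.edgeBoundary T)).connectedComponentMk v).supp := by
  rintro x (rfl | ⟨hvx, hx⟩)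
  · rfl
  · rw [ConnectedComponent.mem_supp_iff, ConnectedComponent.eq]
    exact (deleteEdges_edgeBoundary_adj.2 ⟨(G.mem_neighborSet v x).1 hvx |>.symm,
      iff_of_false hx hv⟩).reachable

lemma min_le_ncard_supp_of_isClique [Finite V] {d : ℕ}
    (hreg : ∀ v, (G.neighborSet v).ncard = d) (hT : G.IsClique T)
    (c : (G.deleteEdges (G.edgeBoundary T)).ConnectedComponent) :
    min T.ncard (d + 1 - T.ncard) ≤ c.supp.ncard := by
  induction c using ConnectedComponent.ind with | h v => ?_
  by_cases hv : v ∈ T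
  · exact (min_le_left _ _).trans
      (Set.ncard_le_ncard (subset_supp_connectedComponentMk_of_isClique hT hv))
  · have hsub := Set.ncard_le_ncard
      (insert_neighborSet_sdiff_subset_supp_connectedComponentMk (G := G) hv)
    have hout := Set.le_ncard_sdiff T (G.neighborSet v)
    rw [Set.ncard_insert_of_notMem fun h => h.1.ne rfl] at hsub
    rw [hreg] at hout
    omega

end SimpleGraph

section AugmentedCube

variable {n : ℕ}

lemma flipBit_ne (i : Fin n) (X : Fin n → Bool) : flipBit i X ≠ X := by
  intro h; simpa [flipBit] using congrFun h i

lemma flipDown_ne (i : Fin n) (X : Fin n → Bool) : flipDown i X ≠ X := by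
  intro h; simpa [flipDown] using congrFun h i

lemma flipBit_left_injective (X : Fin n → Bool) : Function.Injective (flipBit · X) := by
  intro i j h
  by_contra hne
  simpa [flipBit, hne] using congrFun h i

lemma flipDown_left_injective (X : Fin n → Bool) : Function.Injective (flipDown · X) := by
  intro i j h
  by_contra hne
  rcases Ne.lt_or_gt hne with hlt | hlt
  · simpa [flipDown, hlt.not_ge] using congrFun h j
  · simpa [flipDown, hlt.not_ge] using congrFun h i

lemma flipBit_ne_flipDown (X : Fin n → Bool) {i j : Fin n} (hj : 1 ≤ j.val) :
    flipBit i X ≠ flipDown j X := by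
  intro h
  by_cases hi : i.val = 0
  · have hji : j ≠ i := fun e => by rw [e] at hj; omega
    simpa [flipBit, flipDown, hji] using congrFun h j
  · have hzi : (⟨0, j.pos⟩ : Fin n) ≠ i := fun e => hi (by rw [← e])
    have hzj : (⟨0, j.pos⟩ : Fin n) ≤ j := Nat.zero_le _
    simpa [flipBit, flipDown, hzi, hzj] using congrFun h ⟨0, j.pos⟩

lemma neighborSet_augCube (X : Fin n → Bool) :
    (augCube n).neighborSet X =
      Set.range (flipBit · X) ∪ (flipDown · X) '' {i : Fin n | 1 ≤ i.val} := by
  ext Y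
  simp only [SimpleGraph.mem_neighborSet, augCube, Set.mem_union, Set.mem_range,
    Set.mem_image, Set.mem_ofPred_eq, eq_comm (a := Y)]
  constructor
  · rintro ⟨-, (⟨i, h⟩ | ⟨i, hi, h⟩)⟩
    exacts [Or.inl ⟨i, h⟩, Or.inr ⟨i, hi, h⟩]
  · rintro (⟨i, rfl⟩ | ⟨i, hi, rfl⟩)
    exacts [⟨(flipBit_ne i X).symm, Or.inl ⟨i, rfl⟩⟩,
      ⟨(flipDown_ne i X).symm, Or.inr ⟨i, hi, rfl⟩⟩]

lemma ncard_neighborSet_augCube (hn : 1 ≤ n) (X : Fin n → Bool) :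
    ((augCube n).neighborSet X).ncard = 2 * n - 1 := by
  have hdisj :
      Disjoint (Set.range (flipBit · X)) ((flipDown · X) '' {i : Fin n | 1 ≤ i.val}) := by
    rw [Set.disjoint_left]
    rintro _ ⟨i, rfl⟩ ⟨j, hj, h⟩
    exact flipBit_ne_flipDown X hj h.symm
  have hpos : {i : Fin n | 1 ≤ i.val} = {⟨0, hn⟩}ᶜ := by
    ext i
    simp [Fin.ext_iff, Nat.one_le_iff_ne_zero]
  rw [neighborSet_augCube, Set.ncard_union_eq hdisj, ← Set.image_univ,
    Set.ncard_image_of_injective _ (flipBit_left_injective X),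
    Set.ncard_image_of_injective _ (flipDown_left_injective X), hpos,
    Set.ncard_compl, Set.ncard_univ, Set.ncard_singleton, Nat.card_eq_fintype_card,
    Fintype.card_fin]
  omega

end AugmentedCube

/-- Let `n ≥ 4` and let `C_3 = (A, B, C)` be a cycle of length three in `AQ_n`. Then the
edge boundary `E(C_3)` (edges with exactly one endpoint in `{A, B, C}`) has cardinality
`6n - 9`, its removal disconnects `AQ_n` leaving no component that is an isolated vertex
or an isolated edge (i.e. every component has more than two vertices); consequently
`λ₂(AQ_n) ≤ 6n - 9`. -/
theorem augCube_triangle_boundary (n : ℕ) (hn : 4 ≤ n) (A B C : Fin n → Bool)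
    (hAB : (augCube n).Adj A B) (hBC : (augCube n).Adj B C) (hCA : (augCube n).Adj C A) :
    let T : Set (Fin n → Bool) := {A, B, C}
    let F : Set (Sym2 (Fin n → Bool)) :=
      {e | ∃ u v, e = s(u, v) ∧ (augCube n).Adj u v ∧ u ∈ T ∧ v ∉ T}
    F.ncard = 6 * n - 9 ∧
      ¬ ((augCube n).deleteEdges F).Connected ∧
      (∀ c : ((augCube n).deleteEdges F).ConnectedComponent, 2 < c.supp.ncard) ∧
      sInf {k : ℕ | ∃ F' : Set (Sym2 (Fin n → Bool)), F' ⊆ (augCube n).edgeSet ∧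
          F'.ncard = k ∧ ¬ ((augCube n).deleteEdges F').Connected ∧
          ∀ c : ((augCube n).deleteEdges F').ConnectedComponent, 2 < c.supp.ncard} ≤
        6 * n - 9 := by
  intro T F
  have hclique : (augCube n).IsClique T := by
    simp [T, SimpleGraph.isClique_insert, hAB, hBC, hCA.symm, hAB.ne, hBC.ne, hCA.ne.symm]
  have hT : T.ncard = 3 := Set.ncard_eq_three.2 ⟨A, B, C, hAB.ne, hCA.ne.symm, hBC.ne, rfl⟩
  have hreg := ncard_neighborSet_augCube (n := n) (by omega)
  have hF : ((augCube n).edgeBoundary T).ncard = 6 * n - 9 := by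
    rw [SimpleGraph.ncard_edgeBoundary_of_isClique hreg hclique, hT]
    omega
  obtain ⟨v, hv⟩ : ∃ v, v ∉ T := by
    by_contra! h
    have h16 : 2 ^ 4 ≤ 2 ^ n := Nat.pow_le_pow_right two_pos hn
    simp [Set.eq_univ_of_forall h] at hT
    omega
  have hdisc : ¬ ((augCube n).deleteEdges F).Connected :=
    SimpleGraph.not_connected_deleteEdges_edgeBoundary (Set.mem_insert A _) hv
  have hcomp (c : ((augCube n).deleteEdges F).ConnectedComponent) : 2 < c.supp.ncard := by
    have hmin := SimpleGraph.min_le_ncard_supp_of_isClique hreg hclique c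
    rw [hT] at hmin
    exact lt_of_lt_of_le (by omega) hmin
  exact ⟨hF, hdisc, hcomp,
    Nat.sInf_le ⟨F, SimpleGraph.edgeBoundary_subset_edgeSet, hF, hdisc, hcomp⟩⟩
end
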